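/- arXiv:1903.03197 — 2 statements merged into one kernel-verified Lean document; each statement's English description precedes it below -/
import Mathlib

section
/- Let T be a reduced tree with at least 5 vertices and let M be the set of all good pendant edges of T. Then T is well-indumatched if and only if every edge of T is covered by exactly one edge of M. -/
open SimpleGraph

/-- `M` is an induced matching of `G`: a set of edges of `G` such that no two distinct
edges of `M` share an endpoint or have endpoints joined by an edge of `G`. -/
def IsInducedMatching {V : Type*} (G : SimpleGraph V) (M : Set (Sym2 V)) : Prop :=
  M ⊆ G.edgeSet ∧
    ∀ e ∈ M, ∀ f ∈ M, e ≠ f → ∀ u ∈ e, ∀ v ∈ f, u ≠ v ∧ ¬ G.Adj u v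

/-- `M` is a maximal induced matching of `G`. -/
def IsMaximalInducedMatching {V : Type*} (G : SimpleGraph V) (M : Set (Sym2 V)) : Prop :=
  IsInducedMatching G M ∧
    ∀ N : Set (Sym2 V), IsInducedMatching G N → M ⊆ N → N = M

/-- `G` is well-indumatched: all of its maximal induced matchings have the same size. -/
def WellIndumatched {V : Type*} (G : SimpleGraph V) : Prop :=
  ∀ M N : Set (Sym2 V), IsMaximalInducedMatching G M → IsMaximalInducedMatching G N →
    M.ncard = N.ncard

/-- A graph is reduced if no two distinct vertices have the same open neighborhood. -/
def Reduced {V : Type*} (G : SimpleGraph V) : Prop :=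
  ∀ x y : V, G.neighborSet x = G.neighborSet y → x = y

/-- The set of good pendant edges of `G`: edges joining a vertex of degree `1` to a
vertex of degree `2`. -/
def goodPendantEdges {V : Type*} [Fintype V] (G : SimpleGraph V) [DecidableRel G.Adj] :
    Set (Sym2 V) :=
  {e | e ∈ G.edgeSet ∧ ∃ x y : V, e = s(x, y) ∧ G.degree x = 1 ∧ G.degree y = 2}

/-- The edge `e` covers the edge `f`: the distance between `e` and `f` is at most `1`,
i.e. some endpoint of `e` equals or is adjacent to some endpoint of `f`. -/
def EdgeCovers {V : Type*} (G : SimpleGraph V) (e f : Sym2 V) : Prop :=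
  ∃ u ∈ e, ∃ w ∈ f, u = w ∨ G.Adj u w

namespace WIMAux

set_option linter.unusedSectionVars false

variable {V : Type*} [Fintype V] {G : SimpleGraph V} [DecidableRel G.Adj]

lemma sym2_repr {α : Type*} (e : Sym2 α) : ∃ a b, e = s(a, b) := by
  induction e using Sym2.ind with
  | _ a b => exact ⟨a, b, rfl⟩

lemma edgeCovers_comm {e f : Sym2 V} : EdgeCovers G e f ↔ EdgeCovers G f e := by
  constructor <;> rintro ⟨u, hu, w, hw, h⟩ <;>
    exact ⟨w, hw, u, hu, h.imp Eq.symm Adj.symm⟩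

lemma not_edgeCovers_iff {e f : Sym2 V} :
    (∀ u ∈ e, ∀ v ∈ f, u ≠ v ∧ ¬ G.Adj u v) ↔ ¬ EdgeCovers G e f := by
  unfold EdgeCovers
  push_neg
  exact Iff.rfl

lemma isInducedMatching_iff {M : Set (Sym2 V)} :
    IsInducedMatching G M ↔
      M ⊆ G.edgeSet ∧ ∀ e ∈ M, ∀ f ∈ M, e ≠ f → ¬ EdgeCovers G e f := by
  unfold IsInducedMatching
  refine and_congr_right fun _ => ?_
  constructor
  · intro h e he f hf hef
    exact not_edgeCovers_iff.1 (h e he f hf hef)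
  · intro h e he f hf hef
    exact not_edgeCovers_iff.2 (h e he f hf hef)

/-- anatomy of a good pendant edge -/
lemma gpe_spec {m : Sym2 V} (hm : m ∈ goodPendantEdges G) :
    ∃ x y z : V, m = s(x, y) ∧ G.Adj x y ∧ G.Adj y z ∧ z ≠ x ∧
      (∀ w, G.Adj x w → w = y) ∧ (∀ w, G.Adj y w → w = x ∨ w = z) := by
  classical
  obtain ⟨hmE, x, y, rfl, hdx, hdy⟩ := hm
  have hadj : G.Adj x y := (G.mem_edgeSet).1 hmE
  -- neighbors of x
  have hx1 : G.neighborFinset x = {y} := by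
    have hy : y ∈ G.neighborFinset x := by simpa [G.mem_neighborFinset] using hadj
    have := (Finset.card_eq_one).1 hdx
    obtain ⟨a, ha⟩ := this
    rw [ha] at hy ⊢
    simp at hy
    simp [hy]
  -- neighbors of y
  obtain ⟨a, b, hab, hy2⟩ := Finset.card_eq_two.1 hdy
  have hxmem : x ∈ G.neighborFinset y := by simpa [G.mem_neighborFinset] using hadj.symm
  rw [hy2] at hxmem
  simp at hxmem
  have key : ∃ z, z ≠ x ∧ G.neighborFinset y = {x, z} := by
    rcases hxmem with rfl | rfl
    · exact ⟨b, fun h => hab h.symm, by rw [hy2]⟩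
    · exact ⟨a, fun h => hab h, by rw [hy2, Finset.pair_comm]⟩
  obtain ⟨z, hzx, hyz2⟩ := key
  have hyz : G.Adj y z := by
    have : z ∈ G.neighborFinset y := by rw [hyz2]; simp
    simpa [G.mem_neighborFinset] using this
  refine ⟨x, y, z, rfl, hadj, hyz, hzx, ?_, ?_⟩
  · intro w hw
    have : w ∈ G.neighborFinset x := by simpa [G.mem_neighborFinset] using hw
    rw [hx1] at this; simpa using this
  · intro w hw
    have : w ∈ G.neighborFinset y := by simpa [G.mem_neighborFinset] using hw
    rw [hyz2] at this; simpa using this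

lemma gpe_self_cover {m : Sym2 V} (hm : m ∈ goodPendantEdges G) : EdgeCovers G m m := by
  obtain ⟨x, y, z, rfl, _⟩ := gpe_spec hm
  exact ⟨x, by simp, x, by simp, Or.inl rfl⟩

/-- edges covered by a gpe touch {x,y,z} -/
lemma cover_touch {m e : Sym2 V} (hm : m ∈ goodPendantEdges G) {x y z : V}
    (hmx : m = s(x, y)) (hnx : ∀ w, G.Adj x w → w = y) (hny : ∀ w, G.Adj y w → w = x ∨ w = z)
    (hc : EdgeCovers G m e) : ∃ w ∈ e, w = x ∨ w = y ∨ w = z := by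
  obtain ⟨u, hu, w, hw, h⟩ := hc
  rw [hmx] at hu
  refine ⟨w, hw, ?_⟩
  rcases Sym2.mem_iff.1 hu with rfl | rfl
  · rcases h with h | hadj
    · exact Or.inl h.symm
    · exact Or.inr (Or.inl (hnx w hadj))
  · rcases h with h | hadj
    · exact Or.inr (Or.inl h.symm)
    · rcases hny w hadj with h' | h'
      · exact Or.inl h'
      · exact Or.inr (Or.inr h')

/-- L1: a gpe covers at most one edge of an induced matching -/
lemma gpe_cover_unique {N : Set (Sym2 V)} (hN : IsInducedMatching G N)
    {m e₁ e₂ : Sym2 V} (hm : m ∈ goodPendantEdges G)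
    (h1 : e₁ ∈ N) (h2 : e₂ ∈ N) (hc1 : EdgeCovers G m e₁) (hc2 : EdgeCovers G m e₂) :
    e₁ = e₂ := by
  by_contra hne
  obtain ⟨x, y, z, hmx, hadj, hyz, hzx, hnx, hny⟩ := gpe_spec hm
  obtain ⟨w₁, hw₁, hw₁'⟩ := cover_touch hm hmx hnx hny hc1
  obtain ⟨w₂, hw₂, hw₂'⟩ := cover_touch hm hmx hnx hny hc2
  have hxz : ∀ (eA eB : Sym2 V), eA ∈ N → eB ∈ N → eA ≠ eB → x ∈ eA → z ∈ eB → False := by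
    intro eA eB hA hB hAB hxA hzB
    obtain ⟨t, ht⟩ := Sym2.mem_iff_exists.1 hxA
    have hxt : G.Adj x t := by
      have h' := hN.1 hA
      rw [ht] at h'
      exact (G.mem_edgeSet).1 h'
    have hty : t = y := hnx t hxt
    have hyA : y ∈ eA := by rw [ht, hty]; simp
    exact (hN.2 eA hA eB hB hAB y hyA z hzB).2 hyz
  have hcomp := hN.2 e₁ h1 e₂ h2 hne
  rcases hw₁' with rfl | rfl | rfl <;> rcases hw₂' with rfl | rfl | rfl
  · exact (hcomp _ hw₁ _ hw₂).1 rfl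
  · exact (hcomp _ hw₁ _ hw₂).2 hadj
  · exact hxz e₁ e₂ h1 h2 hne hw₁ hw₂
  · exact (hcomp _ hw₁ _ hw₂).2 hadj.symm
  · exact (hcomp _ hw₁ _ hw₂).1 rfl
  · exact (hcomp _ hw₁ _ hw₂).2 hyz
  · exact hxz e₂ e₁ h2 h1 (Ne.symm hne) hw₂ hw₁
  · exact (hcomp _ hw₁ _ hw₂).2 hyz.symm
  · exact (hcomp _ hw₁ _ hw₂).1 rfl

/-- L2: a gpe covers at least one edge of a maximal induced matching -/
lemma gpe_cover_exists {N : Set (Sym2 V)} (hN : IsMaximalInducedMatching G N)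
    {m : Sym2 V} (hm : m ∈ goodPendantEdges G) : ∃ e ∈ N, EdgeCovers G m e := by
  by_contra h
  push_neg at h
  have hmN : m ∉ N := fun hmem => h m hmem (gpe_self_cover hm)
  have hins : IsInducedMatching G (insert m N) := by
    rw [isInducedMatching_iff]
    constructor
    · intro e he
      rcases Set.mem_insert_iff.1 he with rfl | he'
      · exact hm.1
      · exact hN.1.1 he'
    · intro e he f hf hef
      rcases Set.mem_insert_iff.1 he with rfl | he' <;>
        rcases Set.mem_insert_iff.1 hf with rfl | hf'
      · exact absurd rfl hef
      · exact h f hf'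
      · exact fun hc => h e he' (edgeCovers_comm.1 hc)
      · exact (isInducedMatching_iff.1 hN.1).2 e he' f hf' hef
  have := hN.2 (insert m N) hins (Set.subset_insert _ _)
  exact hmN (this ▸ Set.mem_insert m N)

/-- every induced matching extends to a maximal one -/
lemma exists_maximal_ext {N₀ : Set (Sym2 V)} (h0 : IsInducedMatching G N₀) :
    ∃ N, N₀ ⊆ N ∧ IsMaximalInducedMatching G N := by
  classical
  have hfin : {N : Set (Sym2 V) | IsInducedMatching G N ∧ N₀ ⊆ N}.Finite := Set.toFinite _
  have hne : {N : Set (Sym2 V) | IsInducedMatching G N ∧ N₀ ⊆ N}.Nonempty :=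
    ⟨N₀, h0, subset_rfl⟩
  obtain ⟨N, hNmem, hNmax⟩ := Set.Finite.exists_maximalFor Set.ncard _ hfin hne
  refine ⟨N, hNmem.2, hNmem.1, ?_⟩
  intro N' hN' hsub
  by_contra hne'
  have hss : N ⊂ N' := ⟨hsub, fun h => hne' (subset_antisymm h hsub)⟩
  have hlt : N.ncard < N'.ncard := Set.ncard_lt_ncard hss (Set.toFinite _)
  have := hNmax (j := N') ⟨hN', hNmem.2.trans hsub⟩ (le_of_lt hlt)
  omega

lemma closed_eq_univ (hconn : G.Connected) {S : Set V} {v₀ : V} (h0 : v₀ ∈ S)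
    (hcl : ∀ a ∈ S, ∀ b, G.Adj a b → b ∈ S) : ∀ v, v ∈ S := by
  intro v
  obtain ⟨w⟩ := hconn v₀ v
  induction w with
  | nil => exact h0
  | cons hadj p ih => exact ih (hcl _ h0 _ hadj)

/-- in a connected graph on ≥5 vertices the good pendant edges form an induced matching -/
lemma gpes_induced (hconn : G.Connected) (hcard : 5 ≤ Fintype.card V) :
    IsInducedMatching G (goodPendantEdges G) := by
  classical
  rw [isInducedMatching_iff]
  refine ⟨fun e he => he.1, ?_⟩
  intro m₁ hm₁ m₂ hm₂ hne hc
  obtain ⟨x₁, y₁, z₁, hm₁x, hadj₁, hyz₁, hzx₁, hnx₁, hny₁⟩ := gpe_spec hm₁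
  obtain ⟨x₂, y₂, z₂, hm₂x, hadj₂, hyz₂, hzx₂, hnx₂, hny₂⟩ := gpe_spec hm₂
  -- degree facts
  have hdx₁ : G.degree x₁ = 1 := by
    rw [SimpleGraph.degree]
    have : G.neighborFinset x₁ = {y₁} := by
      apply Finset.eq_singleton_iff_unique_mem.2
      exact ⟨(G.mem_neighborFinset _ _).2 hadj₁,
        fun w hw => hnx₁ w ((G.mem_neighborFinset _ _).1 hw)⟩
    rw [this]; simp
  have hdx₂ : G.degree x₂ = 1 := by
    rw [SimpleGraph.degree]
    have : G.neighborFinset x₂ = {y₂} := by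
      apply Finset.eq_singleton_iff_unique_mem.2
      exact ⟨(G.mem_neighborFinset _ _).2 hadj₂,
        fun w hw => hnx₂ w ((G.mem_neighborFinset _ _).1 hw)⟩
    rw [this]; simp
  have hdy₁ : G.degree y₁ ≠ 1 := by
    intro h
    have : G.neighborFinset y₁ = {x₁} := by
      obtain ⟨a, ha⟩ := Finset.card_eq_one.1 h
      have hx : x₁ ∈ G.neighborFinset y₁ := (G.mem_neighborFinset _ _).2 hadj₁.symm
      rw [ha] at hx ⊢
      simp at hx
      simp [hx]
    have hz : z₁ ∈ G.neighborFinset y₁ := (G.mem_neighborFinset _ _).2 hyz₁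
    rw [this] at hz
    simp at hz
    exact hzx₁ hz
  have hdy₂ : G.degree y₂ ≠ 1 := by
    intro h
    have : G.neighborFinset y₂ = {x₂} := by
      obtain ⟨a, ha⟩ := Finset.card_eq_one.1 h
      have hx : x₂ ∈ G.neighborFinset y₂ := (G.mem_neighborFinset _ _).2 hadj₂.symm
      rw [ha] at hx ⊢
      simp at hx
      simp [hx]
    have hz : z₂ ∈ G.neighborFinset y₂ := (G.mem_neighborFinset _ _).2 hyz₂
    rw [this] at hz
    simp at hz
    exact hzx₂ hz
  -- a closed set has everything
  have huniv : ∀ (S : Set V), (∀ a ∈ S, ∀ b, G.Adj a b → b ∈ S) → S.Nonempty →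
      Fintype.card V ≤ S.ncard := by
    intro S hcl ⟨a, ha⟩
    have : S = Set.univ := Set.eq_univ_of_forall (closed_eq_univ hconn ha hcl)
    rw [this, Set.ncard_univ, Nat.card_eq_fintype_card]
  have hxy_ne : ∀ (a b : V), G.degree a = 1 → G.degree b ≠ 1 → a ≠ b := by
    rintro a b h1 h2 rfl; exact h2 h1
  -- main sub-case: y₁ = y₂ is impossible
  have hyy : y₁ ≠ y₂ := by
    intro hy
    have hx12 : x₁ ≠ x₂ := by
      intro hx
      apply hne
      rw [hm₁x, hm₂x, hx, hy]
    have hny₁' : ∀ b, G.Adj y₁ b → b = x₁ ∨ b = x₂ := by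
      intro b hb
      rcases hny₁ b hb with h | h
      · exact Or.inl h
      · -- b = z₁ ; also b ∈ {x₂, z₂}
        rcases hny₂ b (hy ▸ hb) with h' | h'
        · exact Or.inr h'
        · -- z₁ = z₂ : derive x₂ = z₁ from x₂ ∈ N(y₁)
          have hx2mem := hny₁ x₂ (hy ▸ hadj₂.symm)
          rcases hx2mem with h'' | h''
          · exact absurd h''.symm hx12
          · exact Or.inr (h ▸ h''.symm ▸ rfl)
    have hcl : ∀ a ∈ ({x₁, x₂, y₁} : Set V), ∀ b, G.Adj a b → b ∈ ({x₁, x₂, y₁} : Set V) := by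
      intro a ha b hb
      simp only [Set.mem_insert_iff, Set.mem_singleton_iff] at ha ⊢
      rcases ha with rfl | rfl | rfl
      · right; right; exact hnx₁ b hb
      · right; right; exact hy ▸ hnx₂ b hb
      · rcases hny₁' b hb with h | h
        · exact Or.inl h
        · exact Or.inr (Or.inl h)
    have hle := huniv _ hcl ⟨x₁, by simp⟩
    have : ({x₁, x₂, y₁} : Set V).ncard ≤ 3 := by
      apply le_trans (Set.ncard_insert_le _ _)
      have : ({x₂, y₁} : Set V).ncard ≤ 2 := by
        apply le_trans (Set.ncard_insert_le _ _)
        simp [Set.ncard_singleton]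
      omega
    omega
  -- adjacency y₁ ~ y₂ is impossible
  have hyy2 : ¬ G.Adj y₁ y₂ := by
    intro hadj12
    have hz₁ : z₁ = y₂ := by
      rcases hny₁ y₂ hadj12 with h | h
      · exact absurd h.symm (hxy_ne x₁ y₂ hdx₁ hdy₂)
      · exact h.symm
    have hz₂ : z₂ = y₁ := by
      rcases hny₂ y₁ hadj12.symm with h | h
      · exact absurd h.symm (hxy_ne x₂ y₁ hdx₂ hdy₁)
      · exact h.symm
    have hcl : ∀ a ∈ ({x₁, x₂, y₁, y₂} : Set V), ∀ b, G.Adj a b →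
        b ∈ ({x₁, x₂, y₁, y₂} : Set V) := by
      intro a ha b hb
      simp only [Set.mem_insert_iff, Set.mem_singleton_iff] at ha ⊢
      rcases ha with rfl | rfl | rfl | rfl
      · right; right; left; exact hnx₁ b hb
      · right; right; right; exact hnx₂ b hb
      · rcases hny₁ b hb with h | h
        · exact Or.inl h
        · exact Or.inr (Or.inr (Or.inr (hz₁ ▸ h)))
      · rcases hny₂ b hb with h | h
        · exact Or.inr (Or.inl h)
        · exact Or.inr (Or.inr (Or.inl (hz₂ ▸ h)))
    have hle := huniv _ hcl ⟨x₁, by simp⟩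
    have : ({x₁, x₂, y₁, y₂} : Set V).ncard ≤ 4 := by
      apply le_trans (Set.ncard_insert_le _ _)
      apply le_trans (Nat.add_le_add_right (Set.ncard_insert_le _ _) 1)
      have : ({y₁, y₂} : Set V).ncard ≤ 2 := by
        apply le_trans (Set.ncard_insert_le _ _)
        simp [Set.ncard_singleton]
      omega
    omega
  -- now the 8 cases
  obtain ⟨u, hu, w, hw, hrel⟩ := hc
  rw [hm₁x] at hu
  rw [hm₂x] at hw
  have hxx : x₁ = x₂ → False := by
    intro hx
    exact hyy (hnx₁ y₂ (hx ▸ hadj₂)).symm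
  rcases Sym2.mem_iff.1 hu with rfl | rfl <;> rcases Sym2.mem_iff.1 hw with rfl | rfl
  · rcases hrel with h | h
    · exact hxx h
    · exact (hxy_ne w y₁ hdx₂ hdy₁) (hnx₁ w h)
  · rcases hrel with h | h
    · exact (hxy_ne u w hdx₁ hdy₂) h
    · exact hyy ((hnx₁ w h) ▸ rfl)
  · rcases hrel with h | h
    · exact (hxy_ne w u hdx₂ hdy₁) h.symm
    · exact hyy (hnx₂ u h.symm)
  · rcases hrel with h | h
    · exact hyy h
    · exact hyy2 h

/-- the uncovered edges -/
def uncov {V : Type*} [Fintype V] (G : SimpleGraph V) [DecidableRel G.Adj] : Set (Sym2 V) :=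
  {e | e ∈ G.edgeSet ∧ ∀ m ∈ goodPendantEdges G, ¬ EdgeCovers G m e}

lemma gpe_not_uncov {m : Sym2 V} (hm : m ∈ goodPendantEdges G) : m ∉ uncov G :=
  fun h => h.2 m hm (gpe_self_cover hm)

lemma partition_N {N : Set (Sym2 V)} (hsub : N ⊆ G.edgeSet) :
    N.ncard = {e | e ∈ N ∧ ∃ m ∈ goodPendantEdges G, EdgeCovers G m e}.ncard
      + (N ∩ uncov G).ncard := by
  classical
  have hdecomp : N = {e | e ∈ N ∧ ∃ m ∈ goodPendantEdges G, EdgeCovers G m e} ∪ (N ∩ uncov G) := by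
    ext e
    constructor
    · intro he
      by_cases h : ∃ m ∈ goodPendantEdges G, EdgeCovers G m e
      · exact Or.inl ⟨he, h⟩
      · push_neg at h
        exact Or.inr ⟨he, hsub he, h⟩
    · rintro (⟨he, _⟩ | ⟨he, _⟩) <;> exact he
  conv_lhs => rw [hdecomp]
  apply Set.ncard_union_eq _ (Set.toFinite _) (Set.toFinite _)
  rw [Set.disjoint_left]
  rintro e ⟨_, m, hm, hc⟩ ⟨_, heU⟩
  exact heU.2 m hm hc

/-- cover-choice function facts -/
lemma cov_part_eq {N : Set (Sym2 V)} (hN : IsMaximalInducedMatching G N)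
    (huniq : ∀ e ∈ G.edgeSet, ∀ m₁ ∈ goodPendantEdges G, ∀ m₂ ∈ goodPendantEdges G,
      EdgeCovers G m₁ e → EdgeCovers G m₂ e → m₁ = m₂) :
    {e | e ∈ N ∧ ∃ m ∈ goodPendantEdges G, EdgeCovers G m e}.ncard
      = (goodPendantEdges G).ncard := by
  classical
  set F : Sym2 V → Sym2 V := fun m =>
    if h : ∃ e, e ∈ N ∧ EdgeCovers G m e then h.choose else m with hF
  have hFspec : ∀ m ∈ goodPendantEdges G, F m ∈ N ∧ EdgeCovers G m (F m) := by
    intro m hm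
    obtain ⟨e, he, hc⟩ := gpe_cover_exists hN hm
    have hx : ∃ e, e ∈ N ∧ EdgeCovers G m e := ⟨e, he, hc⟩
    simp only [hF, dif_pos hx]
    exact hx.choose_spec
  have himage : {e | e ∈ N ∧ ∃ m ∈ goodPendantEdges G, EdgeCovers G m e}
      = F '' (goodPendantEdges G) := by
    ext e
    constructor
    · rintro ⟨he, m, hm, hc⟩
      refine ⟨m, hm, ?_⟩
      obtain ⟨hFN, hFc⟩ := hFspec m hm
      exact gpe_cover_unique hN.1 hm hFN he hFc hc
    · rintro ⟨m, hm, rfl⟩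
      obtain ⟨hFN, hFc⟩ := hFspec m hm
      exact ⟨hFN, m, hm, hFc⟩
  rw [himage]
  apply Set.ncard_image_of_injOn
  intro m₁ hm₁ m₂ hm₂ heq
  obtain ⟨hFN₁, hFc₁⟩ := hFspec m₁ hm₁
  obtain ⟨hFN₂, hFc₂⟩ := hFspec m₂ hm₂
  exact huniq (F m₁) (hN.1.1 hFN₁) m₁ hm₁ m₂ hm₂ hFc₁ (heq ▸ hFc₂)

lemma count_maximal {N : Set (Sym2 V)} (hN : IsMaximalInducedMatching G N)
    (huniq : ∀ e ∈ G.edgeSet, ∀ m₁ ∈ goodPendantEdges G, ∀ m₂ ∈ goodPendantEdges G,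
      EdgeCovers G m₁ e → EdgeCovers G m₂ e → m₁ = m₂) :
    N.ncard = (goodPendantEdges G).ncard + (N ∩ uncov G).ncard := by
  rw [partition_N hN.1.1, cov_part_eq hN huniq]

/-- under WIM, no edge is covered by two distinct gpes -/
lemma no_double_cover (hconn : G.Connected) (hcard : 5 ≤ Fintype.card V)
    (hWIM : WellIndumatched G) {g : Sym2 V} (hg : g ∈ G.edgeSet)
    {m₁ m₂ : Sym2 V} (h1 : m₁ ∈ goodPendantEdges G) (h2 : m₂ ∈ goodPendantEdges G)
    (hc1 : EdgeCovers G m₁ g) (hc2 : EdgeCovers G m₂ g) : m₁ = m₂ := by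
  classical
  by_contra hne
  have hMind := gpes_induced hconn hcard
  -- base induced matching
  have hBase : IsInducedMatching G
      ((goodPendantEdges G \ {m | EdgeCovers G m g}) ∪ {g}) := by
    rw [isInducedMatching_iff]
    constructor
    · rintro e (⟨he, _⟩ | he)
      · exact he.1
      · simp only [Set.mem_singleton_iff] at he; exact he ▸ hg
    · rintro e (⟨he, hecov⟩ | he) f (⟨hf, hfcov⟩ | hf) hef
      · exact (isInducedMatching_iff.1 hMind).2 e he f hf hef
      · simp only [Set.mem_singleton_iff] at hf
        exact hf ▸ hecov
      · simp only [Set.mem_singleton_iff] at he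
        subst he
        exact fun hc => hfcov (edgeCovers_comm.1 hc)
      · simp only [Set.mem_singleton_iff] at he hf
        exact absurd (he.trans hf.symm) hef
  obtain ⟨N', hN'sub, hN'⟩ := exists_maximal_ext hBase
  have hgN' : g ∈ N' := hN'sub (Or.inr rfl)
  -- bound the covered part of N'
  set F : Sym2 V → Sym2 V := fun m =>
    if h : ∃ e, e ∈ N' ∧ EdgeCovers G m e then h.choose else m with hF
  have hFspec : ∀ m ∈ goodPendantEdges G, F m ∈ N' ∧ EdgeCovers G m (F m) := by
    intro m hm
    obtain ⟨e, he, hc⟩ := gpe_cover_exists hN' hm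
    have hx : ∃ e, e ∈ N' ∧ EdgeCovers G m e := ⟨e, he, hc⟩
    simp only [hF, dif_pos hx]
    exact hx.choose_spec
  have hFg : ∀ m ∈ goodPendantEdges G, EdgeCovers G m g → F m = g := by
    intro m hm hc
    obtain ⟨hFN, hFc⟩ := hFspec m hm
    exact gpe_cover_unique hN'.1 hm hFN hgN' hFc hc
  have hsubim : {e | e ∈ N' ∧ ∃ m ∈ goodPendantEdges G, EdgeCovers G m e}
      ⊆ F '' (goodPendantEdges G \ {m₁}) := by
    rintro e ⟨he, m, hm, hc⟩
    have heF : F m = e := by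
      obtain ⟨hFN, hFc⟩ := hFspec m hm
      exact gpe_cover_unique hN'.1 hm hFN he hFc hc
    by_cases hmm : m = m₁
    · subst hmm
      have : e = g := heF ▸ hFg m hm hc1
      refine ⟨m₂, ⟨h2, Ne.symm hne⟩, ?_⟩
      rw [hFg m₂ h2 hc2, this]
    · exact ⟨m, ⟨hm, hmm⟩, heF⟩
  have hbound : {e | e ∈ N' ∧ ∃ m ∈ goodPendantEdges G, EdgeCovers G m e}.ncard
      ≤ (goodPendantEdges G).ncard - 1 := by
    calc _ ≤ (F '' (goodPendantEdges G \ {m₁})).ncard :=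
          Set.ncard_le_ncard hsubim (Set.toFinite _)
    _ ≤ (goodPendantEdges G \ {m₁}).ncard := Set.ncard_image_le (Set.toFinite _)
    _ = (goodPendantEdges G).ncard - 1 := Set.ncard_diff_singleton_of_mem h1
  -- the companion matching
  have hW'ind : IsInducedMatching G (goodPendantEdges G ∪ (N' ∩ uncov G)) := by
    rw [isInducedMatching_iff]
    constructor
    · rintro e (he | ⟨_, he, _⟩)
      · exact he.1
      · exact he
    · rintro e (he | he) f (hf | hf) hef
      · exact (isInducedMatching_iff.1 hMind).2 e he f hf hef
      · exact fun hc => hf.2.2 e he hc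
      · exact fun hc => he.2.2 f hf (edgeCovers_comm.1 hc)
      · exact (isInducedMatching_iff.1 hN'.1).2 e he.1 f hf.1 hef
  obtain ⟨N'', hN''sub, hN''⟩ := exists_maximal_ext hW'ind
  have hdisj : Disjoint (goodPendantEdges G) (N' ∩ uncov G) := by
    rw [Set.disjoint_left]
    rintro m hm ⟨_, hmU⟩
    exact gpe_not_uncov hm hmU
  have hcard2 : (goodPendantEdges G).ncard + (N' ∩ uncov G).ncard ≤ N''.ncard := by
    rw [← Set.ncard_union_eq hdisj (Set.toFinite _) (Set.toFinite _)]
    exact Set.ncard_le_ncard hN''sub (Set.toFinite _)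
  have hcard1 : N'.ncard ≤ (goodPendantEdges G).ncard - 1 + (N' ∩ uncov G).ncard := by
    rw [partition_N hN'.1.1]
    omega
  have hMpos : 1 ≤ (goodPendantEdges G).ncard :=
    (Set.ncard_pos (Set.toFinite _)).2 ⟨m₁, h1⟩
  have := hWIM N' N'' hN' hN''
  omega

section TreeFacts

variable (htree : G.IsTree) (r : V)

omit [Fintype V] [DecidableRel G.Adj]

include htree

lemma support_dist_le {u w : V} (p : G.Walk r u) (hp : p.length = G.dist r u)
    (hw : w ∈ p.support) : G.dist r w ≤ G.dist r u := by
  classical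
  calc G.dist r w ≤ (p.takeUntil w hw).length := SimpleGraph.dist_le _
  _ ≤ p.length := SimpleGraph.Walk.length_takeUntil_le p hw
  _ = G.dist r u := hp

/-- in a tree, adjacent vertices have distances to `r` differing by exactly one -/
lemma adj_dist {u v : V} (h : G.Adj u v) :
    G.dist r v = G.dist r u + 1 ∨ G.dist r u = G.dist r v + 1 := by
  classical
  obtain ⟨p, hp, hl⟩ := htree.isConnected.exists_path_of_dist r u
  by_cases hv : v ∈ p.support
  · right
    have htake : (p.takeUntil v hv).length = G.dist r v := by
      obtain ⟨pv, hpv, hlv⟩ := htree.isConnected.exists_path_of_dist r v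
      have := htree.IsAcyclic.path_unique ⟨p.takeUntil v hv, hp.takeUntil hv⟩ ⟨pv, hpv⟩
      rw [show p.takeUntil v hv = pv from congrArg Subtype.val this, hlv]
    have hspec := congrArg SimpleGraph.Walk.length (p.take_spec hv)
    rw [SimpleGraph.Walk.length_append, htake, hl] at hspec
    have hdrop1 : (p.dropUntil v hv).length ≤ 1 := by
      have htri := htree.isConnected.dist_triangle (u := r) (v := v) (w := u)
      have : G.dist v u = 1 := (SimpleGraph.dist_eq_one_iff_adj).2 h.symm
      omega
    have hdrop0 : (p.dropUntil v hv).length ≠ 0 := by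
      intro h0
      have := p.dropUntil v hv
      rcases hq : p.dropUntil v hv with _ | ⟨hadj, q⟩
      · exact h.ne rfl
      · rw [hq] at h0; simp at h0
    omega
  · left
    have hQ : (p.concat h).IsPath := by
      rw [SimpleGraph.Walk.isPath_def, SimpleGraph.Walk.support_concat]
      exact List.Nodup.append ((SimpleGraph.Walk.isPath_def _).1 hp) (List.nodup_singleton v)
        (by simpa using hv)
    obtain ⟨pv, hpv, hlv⟩ := htree.isConnected.exists_path_of_dist r v
    have := htree.IsAcyclic.path_unique ⟨p.concat h, hQ⟩ ⟨pv, hpv⟩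
    have hlen : (p.concat h).length = G.dist r v := by
      rw [show p.concat h = pv from congrArg Subtype.val this, hlv]
    rw [SimpleGraph.Walk.length_concat, hl] at hlen
    omega

/-- in a tree, the parent (neighbour closer to the root) is unique -/
lemma parent_unique {u u' v : V} (h : G.Adj u v) (h' : G.Adj u' v)
    (hd : G.dist r u + 1 = G.dist r v) (hd' : G.dist r u' + 1 = G.dist r v) : u = u' := by
  classical
  obtain ⟨p, hp, hl⟩ := htree.isConnected.exists_path_of_dist r u
  obtain ⟨p', hp', hl'⟩ := htree.isConnected.exists_path_of_dist r u'
  have hvp : v ∉ p.support := by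
    intro hv
    have := support_dist_le htree r p hl hv
    omega
  have hvp' : v ∉ p'.support := by
    intro hv
    have := support_dist_le htree r p' hl' hv
    omega
  have hQ : (p.concat h).IsPath := by
    rw [SimpleGraph.Walk.isPath_def, SimpleGraph.Walk.support_concat]
    exact List.Nodup.append ((SimpleGraph.Walk.isPath_def _).1 hp) (List.nodup_singleton v)
      (by simpa using hvp)
  have hQ' : (p'.concat h').IsPath := by
    rw [SimpleGraph.Walk.isPath_def, SimpleGraph.Walk.support_concat]
    exact List.Nodup.append ((SimpleGraph.Walk.isPath_def _).1 hp') (List.nodup_singleton v)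
      (by simpa using hvp')
  have hpath := htree.IsAcyclic.path_unique ⟨p.concat h, hQ⟩ ⟨p'.concat h', hQ'⟩
  have hwalk : p.concat h = p'.concat h' := congrArg Subtype.val hpath
  -- u lies on p'
  have humem : u ∈ p'.support := by
    have h1 : u ∈ (p.concat h).support := by
      rw [SimpleGraph.Walk.support_concat]
      exact List.mem_append.2 (Or.inl (SimpleGraph.Walk.end_mem_support p))
    rw [hwalk, SimpleGraph.Walk.support_concat] at h1
    rcases List.mem_append.1 h1 with h1 | h1
    · exact h1
    · simp at h1
      exfalso
      rw [h1] at hd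
      omega
  have hspec := congrArg SimpleGraph.Walk.length (p'.take_spec humem)
  rw [SimpleGraph.Walk.length_append] at hspec
  have htl : G.dist r u ≤ (p'.takeUntil u humem).length := SimpleGraph.dist_le _
  have hdrop0 : (p'.dropUntil u humem).length = 0 := by omega
  rcases hq : p'.dropUntil u humem with _ | ⟨hadj, q⟩
  · exact rfl
  · rw [hq] at hdrop0; simp at hdrop0

/-- trees have no triangles -/
lemma no_triangle {a b c : V} (hab : G.Adj a b) (hbc : G.Adj b c) (hac : G.Adj a c) : False := by
  have p1 : G.Walk a c := SimpleGraph.Walk.cons hac SimpleGraph.Walk.nil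
  have hp1 : (SimpleGraph.Walk.cons hac SimpleGraph.Walk.nil : G.Walk a c).IsPath := by
    simp [SimpleGraph.Walk.isPath_def, hac.ne]
  have hp2 : (SimpleGraph.Walk.cons hab (SimpleGraph.Walk.cons hbc
      SimpleGraph.Walk.nil) : G.Walk a c).IsPath := by
    simp [SimpleGraph.Walk.isPath_def]
    exact ⟨⟨hab.ne, hac.ne⟩, hbc.ne⟩
  have := htree.IsAcyclic.path_unique
    ⟨SimpleGraph.Walk.cons hac SimpleGraph.Walk.nil, hp1⟩
    ⟨SimpleGraph.Walk.cons hab (SimpleGraph.Walk.cons hbc SimpleGraph.Walk.nil), hp2⟩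
  have := congrArg (fun q : G.Path a c => q.1.length) this
  simp at this

/-- every non-root vertex has a parent -/
lemma parent_exists {v : V} (hv : v ≠ r) :
    ∃ u, G.Adj u v ∧ G.dist r u + 1 = G.dist r v := by
  classical
  have hdpos : 0 < G.dist r v := htree.isConnected.pos_dist_of_ne (Ne.symm hv)
  obtain ⟨p, hp, hl⟩ := htree.isConnected.exists_path_of_dist r v
  rcases hq : p.reverse with _ | ⟨hadj, q⟩
  · exact absurd rfl hv
  · rename_i u
    refine ⟨u, hadj.symm, ?_⟩
    have hlen : p.length = q.length + 1 := by
      have h0 := congrArg SimpleGraph.Walk.length hq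
      rw [SimpleGraph.Walk.length_reverse] at h0
      simpa using h0
    have h1 : G.dist r u ≤ q.length := by
      have h2 := SimpleGraph.dist_le q.reverse
      rwa [SimpleGraph.Walk.length_reverse] at h2
    have h2 : G.dist r v ≤ G.dist r u + 1 := by
      have htri := htree.isConnected.dist_triangle (u := r) (v := u) (w := v)
      have : G.dist u v = 1 := (SimpleGraph.dist_eq_one_iff_adj).2 hadj.symm
      omega
    omega

end TreeFacts

/-- the common final contradiction: given an uncovered edge `f` and a set of anchors `A`
blocking `f` and everything conflicting with `f` inside the uncovered part -/
lemma main_contra (hconn : G.Connected) (hcard : 5 ≤ Fintype.card V)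
    (hWIM : WellIndumatched G)
    (huniq : ∀ e ∈ G.edgeSet, ∀ m₁ ∈ goodPendantEdges G, ∀ m₂ ∈ goodPendantEdges G,
      EdgeCovers G m₁ e → EdgeCovers G m₂ e → m₁ = m₂)
    {f : Sym2 V} (hfU : f ∈ uncov G)
    {A : Set (Sym2 V)} (hA : IsInducedMatching G A)
    (hAf : ∃ a ∈ A, EdgeCovers G a f ∧ a ∉ uncov G)
    (hblock : ∀ h ∈ uncov G, (∀ a ∈ A, a ≠ h → ¬ EdgeCovers G a h) → ¬ EdgeCovers G h f) :
    False := by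
  classical
  have hMind := gpes_induced hconn hcard
  obtain ⟨N, hNsub, hN⟩ := exists_maximal_ext hA
  set W := N ∩ uncov G with hWdef
  obtain ⟨a₀, ha₀A, ha₀f, ha₀U⟩ := hAf
  have hfN : f ∉ N := by
    intro hfN
    have hne : a₀ ≠ f := fun h => ha₀U (h ▸ hfU)
    exact (isInducedMatching_iff.1 hN.1).2 a₀ (hNsub ha₀A) f hfN hne ha₀f
  have hWf : ∀ h ∈ W, ¬ EdgeCovers G h f := by
    intro h hh
    refine hblock h hh.2 ?_
    intro a haA hne
    exact (isInducedMatching_iff.1 hN.1).2 a (hNsub haA) h hh.1 hne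
  have hfW : f ∉ W := fun h => hfN h.1
  have hBig : IsInducedMatching G (goodPendantEdges G ∪ insert f W) := by
    rw [isInducedMatching_iff]
    constructor
    · rintro e (he | he)
      · exact he.1
      · rcases Set.mem_insert_iff.1 he with rfl | he'
        · exact hfU.1
        · exact hN.1.1 he'.1
    · have hsideU : ∀ e ∈ insert f W, e ∈ uncov G := by
        rintro e he
        rcases Set.mem_insert_iff.1 he with rfl | he'
        · exact hfU
        · exact he'.2
      rintro e (he | he) g (hg | hg) hne
      · exact (isInducedMatching_iff.1 hMind).2 e he g hg hne
      · exact fun hc => (hsideU g hg).2 e he hc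
      · exact fun hc => (hsideU e he).2 g hg (edgeCovers_comm.1 hc)
      · -- both on the uncovered side
        rcases Set.mem_insert_iff.1 he with rfl | he' <;>
          rcases Set.mem_insert_iff.1 hg with rfl | hg'
        · exact absurd rfl hne
        · exact fun hc => hWf g hg' (edgeCovers_comm.1 hc)
        · exact hWf e he'
        · exact (isInducedMatching_iff.1 hN.1).2 e he'.1 g hg'.1 hne
  obtain ⟨N₀, hN₀sub, hN₀⟩ := exists_maximal_ext hBig
  have h1 : N.ncard = (goodPendantEdges G).ncard + W.ncard := count_maximal hN huniq
  have hdisj : Disjoint (goodPendantEdges G) (insert f W) := by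
    rw [Set.disjoint_left]
    rintro m hm hmem
    rcases Set.mem_insert_iff.1 hmem with rfl | h'
    · exact gpe_not_uncov hm hfU
    · exact gpe_not_uncov hm h'.2
  have h2 : (goodPendantEdges G ∪ insert f W).ncard
      = (goodPendantEdges G).ncard + (W.ncard + 1) := by
    rw [Set.ncard_union_eq hdisj (Set.toFinite _) (Set.toFinite _),
      Set.ncard_insert_of_notMem hfW (Set.toFinite _)]
  have h3 : (goodPendantEdges G ∪ insert f W).ncard ≤ N₀.ncard :=
    Set.ncard_le_ncard hN₀sub (Set.toFinite _)
  have := hWIM N N₀ hN hN₀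
  omega

section Monster

variable (htree : G.IsTree) (r : V)

/-- existence of a safe blocking edge near the grandparent -/
lemma ghat_exists (hred : Reduced G) {p g x₀ : V}
    (hgx : G.Adj g x₀) (hx₀p : x₀ ≠ p) (hgp : G.Adj g p) (hU : s(g, x₀) ∈ uncov G) :
    ∃ b c, G.Adj g b ∧ b ≠ p ∧ G.Adj b c ∧ c ≠ g := by
  classical
  by_cases hx₀ : ∃ c, G.Adj x₀ c ∧ c ≠ g
  · obtain ⟨c, hc, hcg⟩ := hx₀
    exact ⟨x₀, c, hgx, hx₀p, hc, hcg⟩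
  push_neg at hx₀
  have hx₀leaf : ∀ w, G.Adj x₀ w → w = g := fun w hw => hx₀ w hw
  have hdx₀ : G.degree x₀ = 1 := by
    rw [SimpleGraph.degree]
    have : G.neighborFinset x₀ = {g} := Finset.eq_singleton_iff_unique_mem.2
      ⟨(G.mem_neighborFinset _ _).2 hgx.symm, fun w hw => hx₀leaf w ((G.mem_neighborFinset _ _).1 hw)⟩
    rw [this]; simp
  by_cases hsub : ∀ τ, G.Adj g τ → τ = p ∨ τ = x₀
  · -- g has degree 2, so s(x₀,g) would be a good pendant edge covering s(g,x₀)
    exfalso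
    have hdg : G.degree g = 2 := by
      rw [SimpleGraph.degree]
      have : G.neighborFinset g = {p, x₀} := by
        apply Finset.Subset.antisymm
        · intro w hw
          rcases hsub w ((G.mem_neighborFinset _ _).1 hw) with rfl | rfl <;> simp
        · intro w hw
          simp only [Finset.mem_insert, Finset.mem_singleton] at hw
          rcases hw with rfl | rfl
          · exact (G.mem_neighborFinset _ _).2 hgp
          · exact (G.mem_neighborFinset _ _).2 hgx
      rw [this]
      rw [Finset.card_insert_of_notMem (by simpa using fun h => hx₀p h.symm)]
      simp
    have hgpe : s(x₀, g) ∈ goodPendantEdges G := by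
      refine ⟨(G.mem_edgeSet).2 hgx.symm, x₀, g, rfl, hdx₀, hdg⟩
    apply hU.2 (s(x₀, g)) hgpe
    refine ⟨g, by simp, g, by simp, Or.inl rfl⟩
  push_neg at hsub
  obtain ⟨τ, hgτ, hτp, hτx₀⟩ := hsub
  by_cases hτ : ∃ c, G.Adj τ c ∧ c ≠ g
  · obtain ⟨c, hc, hcg⟩ := hτ
    exact ⟨τ, c, hgτ, hτp, hc, hcg⟩
  push_neg at hτ
  exfalso
  apply hτx₀
  apply hred
  ext w
  simp only [SimpleGraph.mem_neighborSet]
  constructor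
  · intro hw
    have := hτ w hw
    subst this
    exact hgx.symm
  · intro hw
    have := hx₀leaf w hw
    subst this
    exact hgτ.symm

include htree

/-- the auxiliary blocking edge is compatible with the main anchor -/
lemma ghat_compat {p q g b c α β : V}
    (hdpq : G.dist r p + 1 = G.dist r q)
    (hpα : G.Adj p α) (hdα : G.dist r α = G.dist r q)
    (hgp : G.Adj g p) (hdg : G.dist r g + 1 = G.dist r p)
    (hgb : G.Adj g b) (hbp : b ≠ p) (hbc : G.Adj b c) (hcg : c ≠ g)
    (hβ : (G.Adj α β ∧ G.dist r β = G.dist r q + 1) ∨ β = p) :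
    ¬ EdgeCovers G s(α, β) s(b, c) := by
  rintro ⟨u, hu, w, hw, hrel⟩
  have hb2 := adj_dist htree r hgb
  have hc2 := adj_dist htree r hbc
  have hdpα : G.dist r p + 1 = G.dist r α := by omega
  rcases Sym2.mem_iff.1 hu with h | h <;> rcases Sym2.mem_iff.1 hw with h2 | h2 <;>
    rw [h, h2] at hrel
  · -- (α, b)
    rcases hrel with h3 | hadj
    · rw [h3] at hdα; omega
    · have h3 := adj_dist htree r hadj
      have hpar : G.dist r b + 1 = G.dist r α := by omega
      exact hbp (parent_unique htree r hadj.symm hpα hpar hdpα)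
  · -- (α, c)
    rcases hrel with h3 | hadj
    · rw [← h3] at hbc hc2
      have hpar : G.dist r b + 1 = G.dist r α := by omega
      exact hbp (parent_unique htree r hbc hpα hpar hdpα)
    · have h3 := adj_dist htree r hadj
      omega
  · -- (β, b)
    rcases hβ with ⟨hαβ, hdβ⟩ | hβp
    · rcases hrel with h3 | hadj
      · rw [h3] at hdβ; omega
      · have h3 := adj_dist htree r hadj
        omega
    · rw [hβp] at hrel
      rcases hrel with h3 | hadj
      · exact hbp h3.symm
      · have h3 := adj_dist htree r hadj
        omega
  · -- (β, c)
    rcases hβ with ⟨hαβ, hdβ⟩ | hβp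
    · rcases hrel with h3 | hadj
      · rw [h3] at hdβ
        omega
      · have h3 := adj_dist htree r hadj
        have hpar : G.dist r c + 1 = G.dist r β := by omega
        have hdαβ : G.dist r α + 1 = G.dist r β := by omega
        have hcα : c = α := parent_unique htree r hadj.symm hαβ hpar hdαβ
        rw [hcα] at hbc hc2
        have hpar2 : G.dist r b + 1 = G.dist r α := by omega
        exact hbp (parent_unique htree r hbc hpα hpar2 hdpα)
    · rw [hβp] at hrel
      rcases hrel with h3 | hadj
      · rw [← h3] at hc2
        omega
      · have h3 := adj_dist htree r hadj
        rcases h3 with h3 | h3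
        · have hpar : G.dist r b + 1 = G.dist r c := by omega
          exact hbp (parent_unique htree r hbc hadj hpar (by omega))
        · exact hcg (parent_unique htree r hadj.symm hgp (by omega) (by omega))

omit htree in
lemma closed_card (hconn : G.Connected) {S : Set V} {v₀ : V} (h0 : v₀ ∈ S)
    (hcl : ∀ a ∈ S, ∀ b, G.Adj a b → b ∈ S) : Fintype.card V ≤ S.ncard := by
  have : S = Set.univ := Set.eq_univ_of_forall (closed_eq_univ hconn h0 hcl)
  rw [this, Set.ncard_univ, Nat.card_eq_fintype_card]

omit r in
/-- the big lemma: under WIM every edge is covered by some good pendant edge -/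
lemma no_uncovered (hred : Reduced G) (hcard : 5 ≤ Fintype.card V)
    (hWIM : WellIndumatched G)
    (huniq : ∀ e ∈ G.edgeSet, ∀ m₁ ∈ goodPendantEdges G, ∀ m₂ ∈ goodPendantEdges G,
      EdgeCovers G m₁ e → EdgeCovers G m₂ e → m₁ = m₂) :
    ∀ e ∈ G.edgeSet, ∃ m ∈ goodPendantEdges G, EdgeCovers G m e := by
  classical
  have hconn := htree.isConnected
  by_contra hcon
  push_neg at hcon
  obtain ⟨f₀, hf₀E, hf₀⟩ := hcon
  have hU₀ : f₀ ∈ uncov G := ⟨hf₀E, hf₀⟩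
  have hVne : Nonempty V := Fintype.card_pos_iff.1 (by omega)
  obtain ⟨rr⟩ := hVne
  set ed : Sym2 V → ℕ :=
    fun e => Sym2.lift ⟨fun a b => max (G.dist rr a) (G.dist rr b), fun a b => max_comm _ _⟩ e
    with hed
  have hedeq : ∀ a b : V, ed s(a, b) = max (G.dist rr a) (G.dist rr b) := by
    intro a b; simp [hed]
  have hedmem : ∀ (e : Sym2 V), ∀ w ∈ e, G.dist rr w ≤ ed e := by
    intro e
    induction e using Sym2.inductionOn with
    | _ a b =>
      intro w hw
      rcases Sym2.mem_iff.1 hw with rfl | rfl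
      · rw [hedeq]; exact le_max_left _ _
      · rw [hedeq]; exact le_max_right _ _
  obtain ⟨f, hfU, hfmax⟩ : ∃ f ∈ uncov G, ∀ h ∈ uncov G, ed h ≤ ed f := by
    obtain ⟨f, hf, hmax'⟩ :=
      Set.Finite.exists_maximalFor ed (uncov G) (Set.toFinite _) ⟨f₀, hU₀⟩
    refine ⟨f, hf, fun h hh => ?_⟩
    by_contra hlt
    push_neg at hlt
    have := hmax' (j := h) hh hlt.le
    omega
  obtain ⟨aa, bb', hab⟩ := sym2_repr f
  have hadjab : G.Adj aa bb' := (G.mem_edgeSet).1 (hab ▸ hfU.1)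
  obtain ⟨p, q, hfpq, hpq, hdpq⟩ :
      ∃ p q, f = s(p, q) ∧ G.Adj p q ∧ G.dist rr p + 1 = G.dist rr q := by
    rcases adj_dist htree rr hadjab with h | h
    · exact ⟨aa, bb', hab, hadjab, by omega⟩
    · exact ⟨bb', aa, hab.trans Sym2.eq_swap, hadjab.symm, by omega⟩
  have hpf : p ∈ f := by rw [hfpq]; simp
  have hqf : q ∈ f := by rw [hfpq]; simp
  have hUdep : ∀ h ∈ uncov G, ∀ w ∈ h, G.dist rr w ≤ G.dist rr q := by
    intro h hh w hw
    have h1 := hedmem h w hw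
    have h2 := hfmax h hh
    have h3 : ed f = G.dist rr q := by
      rw [hfpq, hedeq]
      exact max_eq_right (by omega)
    omega
  -- any uncovered edge conflicting with f contains p or hangs at the parent of p
  have hconfl : ∀ h ∈ uncov G, EdgeCovers G h f → p ∈ h ∨
      (∃ g x, h = s(g, x) ∧ G.Adj g p ∧ G.dist rr g + 1 = G.dist rr p ∧
        G.Adj g x ∧ x ≠ p) := by
    intro h hh hc
    obtain ⟨w, hwh, w', hw'f, hrel⟩ := hc
    obtain ⟨x, hx⟩ := Sym2.mem_iff_exists.1 hwh
    have hwx : G.Adj w x := (G.mem_edgeSet).1 (hx ▸ hh.1)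
    have hsib : G.Adj p w → G.dist rr w = G.dist rr q → x = p := by
      intro hpw hdw
      rcases adj_dist htree rr hwx with h4 | h4
      · exfalso
        have := hUdep _ hh x (by rw [hx]; simp)
        omega
      · exact parent_unique htree rr hwx.symm hpw (by omega) (by omega)
    rw [hfpq] at hw'f
    rcases Sym2.mem_iff.1 hw'f with h5 | h5 <;> rw [h5] at hrel
    · rcases hrel with h3 | hadj
      · exact Or.inl (h3 ▸ hwh)
      · rcases adj_dist htree rr hadj with h4 | h4
        · by_cases hxp : x = p
          · exact Or.inl (by rw [hx, hxp]; simp)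
          · exact Or.inr ⟨w, x, hx, hadj, by omega, hwx, hxp⟩
        · have hxp : x = p := hsib hadj.symm (by omega)
          exact Or.inl (by rw [hx, hxp]; simp)
    · rcases hrel with h3 | hadj
      · -- h contains q ; the other endpoint of h must be p
        have hqh : q ∈ h := h3 ▸ hwh
        obtain ⟨x', hx'⟩ := Sym2.mem_iff_exists.1 hqh
        have hqx' : G.Adj q x' := (G.mem_edgeSet).1 (hx' ▸ hh.1)
        rcases adj_dist htree rr hqx' with h4 | h4
        · exfalso
          have := hUdep _ hh x' (by rw [hx']; simp)
          omega
        · have : x' = p := parent_unique htree rr hqx'.symm hpq (by omega) hdpq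
          exact Or.inl (by rw [hx', this]; simp)
      · rcases adj_dist htree rr hadj with h4 | h4
        · have : w = p := parent_unique htree rr hadj hpq (by omega) hdpq
          exact Or.inl (this ▸ hwh)
        · exfalso
          have := hUdep h hh w hwh
          omega
  -- the master finisher
  have master : ∀ (α β : V), G.Adj p α → G.dist rr α = G.dist rr q →
      ((G.Adj α β ∧ G.dist rr β = G.dist rr q + 1) ∨ β = p) →
      s(α, β) ∈ G.edgeSet → s(α, β) ∉ uncov G → False := by
    intro α β hpα hdα hβ hE hnotU
    have hcovp : ∀ h, p ∈ h → EdgeCovers G s(α, β) h :=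
      fun h hp => ⟨α, by simp, p, hp, Or.inr hpα.symm⟩
    have hcovf : EdgeCovers G s(α, β) f := hcovp f hpf
    by_cases hgQ : ∃ g x, G.Adj g p ∧ G.dist rr g + 1 = G.dist rr p ∧ G.Adj g x ∧ x ≠ p ∧
        s(g, x) ∈ uncov G
    · obtain ⟨g, x₀, hgp, hdg, hgx, hx₀p, hgxU⟩ := hgQ
      obtain ⟨b, c, hgb, hbp, hbc, hcg⟩ := ghat_exists hred hgx hx₀p hgp hgxU
      have hcompat : ¬ EdgeCovers G s(α, β) s(b, c) :=
        ghat_compat htree rr hdpq hpα hdα hgp hdg hgb hbp hbc hcg hβ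
      have hA : IsInducedMatching G {s(α, β), s(b, c)} := by
        rw [isInducedMatching_iff]
        constructor
        · rintro e (rfl | rfl)
          · exact hE
          · exact (G.mem_edgeSet).2 hbc
        · rintro e (rfl | rfl) e' (rfl | rfl) hne
          · exact absurd rfl hne
          · exact hcompat
          · exact fun hc => hcompat (edgeCovers_comm.1 hc)
          · exact absurd rfl hne
      refine main_contra hconn hcard hWIM huniq hfU hA
        ⟨s(α, β), by simp, hcovf, hnotU⟩ ?_
      intro h hh hcomp hc
      rcases hconfl h hh hc with hp | ⟨g', x, hx, hg'p, hdg', hg'x, hxp⟩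
      · exact hcomp (s(α, β)) (by simp) (fun he => hnotU (he ▸ hh)) (hcovp h hp)
      · have hgg : g' = g := parent_unique htree rr hg'p hgp hdg' hdg
        have hgh : g ∈ h := by rw [hx, ← hgg]; simp
        have hne2 : s(b, c) ≠ h := by
          intro he
          have : g ∈ ({b, c} : Set V) := by
            have := he ▸ hgh
            rcases Sym2.mem_iff.1 this with h' | h' <;> simp [h']
          rcases this with h' | h'
          · exact hgb.ne' h'.symm
          · exact hcg h'.symm
        exact hcomp (s(b, c)) (by simp) hne2 ⟨b, by simp, g, hgh, Or.inr hgb.symm⟩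
    · have hA : IsInducedMatching G {s(α, β)} := by
        rw [isInducedMatching_iff]
        refine ⟨by rintro e rfl; exact hE, ?_⟩
        rintro e rfl e' rfl hne
        exact absurd rfl hne
      refine main_contra hconn hcard hWIM huniq hfU hA
        ⟨s(α, β), by simp, hcovf, hnotU⟩ ?_
      intro h hh hcomp hc
      rcases hconfl h hh hc with hp | ⟨g', x, hx, hg'p, hdg', hg'x, hxp⟩
      · exact hcomp (s(α, β)) (by simp) (fun he => hnotU (he ▸ hh)) (hcovp h hp)
      · exact hgQ ⟨g', x, hg'p, hdg', hg'x, hxp, hx ▸ hh⟩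
  -- now the case analysis
  by_cases hch : ∃ c, G.Adj q c ∧ G.dist rr c = G.dist rr q + 1
  · -- q has a deeper neighbour
    obtain ⟨c₀, hqc₀, hdc₀⟩ := hch
    refine master q c₀ hpq rfl (Or.inl ⟨hqc₀, hdc₀⟩) ((G.mem_edgeSet).2 hqc₀) ?_
    intro hmem
    have := hUdep _ hmem c₀ (by simp)
    omega
  · -- q is a leaf
    push_neg at hch
    have hqleaf : ∀ w, G.Adj q w → w = p := by
      intro w hw
      rcases adj_dist htree rr hw with h | h
      · exact absurd h (hch w hw)
      · exact parent_unique htree rr hw.symm hpq (by omega) hdpq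
    have hdq1 : G.degree q = 1 := by
      rw [SimpleGraph.degree]
      have : G.neighborFinset q = {p} := Finset.eq_singleton_iff_unique_mem.2
        ⟨(G.mem_neighborFinset _ _).2 hpq.symm,
          fun w hw => hqleaf w ((G.mem_neighborFinset _ _).1 hw)⟩
      rw [this]; simp
    have hnsq : G.neighborSet q = {p} := by
      ext w
      simp only [SimpleGraph.mem_neighborSet, Set.mem_singleton_iff]
      exact ⟨fun hw => hqleaf w hw, fun hw => hw ▸ hpq.symm⟩
    have hdegp3 : 3 ≤ G.degree p := by
      by_contra hlt
      push_neg at hlt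
      have hq1 : q ∈ G.neighborFinset p := (G.mem_neighborFinset _ _).2 hpq
      have h1le : 1 ≤ G.degree p := Finset.card_pos.2 ⟨q, hq1⟩
      have hcases : G.degree p = 1 ∨ G.degree p = 2 := by omega
      rcases hcases with hdeg | hdeg
      · have hnp : G.neighborFinset p = {q} := by
          obtain ⟨a, ha⟩ := Finset.card_eq_one.1 hdeg
          rw [ha] at hq1 ⊢
          simp at hq1
          simp [hq1]
        have hplf : ∀ w, G.Adj p w → w = q := by
          intro w hw
          have : w ∈ G.neighborFinset p := (G.mem_neighborFinset _ _).2 hw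
          rw [hnp] at this; simpa using this
        have hcl : ∀ a ∈ ({p, q} : Set V), ∀ b, G.Adj a b → b ∈ ({p, q} : Set V) := by
          rintro a (rfl | rfl) b hb
          · exact Or.inr (hplf b hb)
          · exact Or.inl (hqleaf b hb)
        have hle := closed_card hconn (Set.mem_insert p {q}) hcl
        have h2 : ({p, q} : Set V).ncard ≤ 2 :=
          le_trans (Set.ncard_insert_le _ _) (by simp)
        omega
      · have hfgpe : f ∈ goodPendantEdges G :=
          ⟨hfU.1, q, p, by rw [hfpq, Sym2.eq_swap], hdq1, hdeg⟩
        exact hfU.2 f hfgpe ⟨p, hpf, p, hpf, Or.inl rfl⟩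
    -- find a sibling of q
    obtain ⟨s₀, hps₀, hs₀q, hs₀d⟩ : ∃ s, G.Adj p s ∧ s ≠ q ∧ G.dist rr s = G.dist rr q := by
      by_contra hno
      push_neg at hno
      have hpar' : ∀ w, G.Adj p w → w ≠ q → G.dist rr w + 1 = G.dist rr p := by
        intro w hw hwq
        rcases adj_dist htree rr hw with h | h
        · exact absurd (by omega) (hno w hw hwq)
        · omega
      have hsubq : ({q} : Finset V) ⊆ G.neighborFinset p := by
        intro w hw
        simp only [Finset.mem_singleton] at hw
        exact hw ▸ (G.mem_neighborFinset _ _).2 hpq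
      have h2card : 2 ≤ (G.neighborFinset p \ {q}).card := by
        have h1 : (G.neighborFinset p \ {q}).card
            = (G.neighborFinset p).card - ({q} : Finset V).card := Finset.card_sdiff_of_subset hsubq
        have h2 : ({q} : Finset V).card = 1 := Finset.card_singleton q
        have h3 : (G.neighborFinset p).card = G.degree p := rfl
        omega
      obtain ⟨w₁, hw₁, w₂, hw₂, hww⟩ := Finset.one_lt_card.1 (lt_of_lt_of_le Nat.one_lt_two h2card)
      have hw₁' : G.Adj p w₁ ∧ w₁ ≠ q := by
        simpa [Finset.mem_sdiff, G.mem_neighborFinset] using hw₁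
      have hw₂' : G.Adj p w₂ ∧ w₂ ≠ q := by
        simpa [Finset.mem_sdiff, G.mem_neighborFinset] using hw₂
      exact hww (parent_unique htree rr hw₁'.1.symm hw₂'.1.symm
        (hpar' w₁ hw₁'.1 hw₁'.2) (hpar' w₂ hw₂'.1 hw₂'.2))
    -- the sibling is not a leaf (otherwise it would be a twin of q)
    obtain ⟨d₀, hs₀d₀, hd₀p⟩ : ∃ w, G.Adj s₀ w ∧ w ≠ p := by
      by_contra hno
      push_neg at hno
      apply hs₀q
      apply hred
      rw [hnsq]
      ext w
      simp only [SimpleGraph.mem_neighborSet, Set.mem_singleton_iff]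
      exact ⟨fun hw => hno w hw, fun hw => hw ▸ hps₀.symm⟩
    have hd₀d : G.dist rr d₀ = G.dist rr q + 1 := by
      rcases adj_dist htree rr hs₀d₀ with h | h
      · omega
      · exact absurd (parent_unique htree rr hs₀d₀.symm hps₀ (by omega) (by omega)) hd₀p
    refine master s₀ d₀ hps₀ hs₀d (Or.inl ⟨hs₀d₀, hd₀d⟩) ((G.mem_edgeSet).2 hs₀d₀) ?_
    intro hmem
    have := hUdep _ hmem d₀ (by simp)
    omega

end Monster

end WIMAux

/-- A reduced tree `T` on at least `5` vertices is well-indumatched iff every edge of `T`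
is covered by exactly one good pendant edge. -/
theorem stmt_10 {V : Type*} [Fintype V] (G : SimpleGraph V) [DecidableRel G.Adj]
    (hred : Reduced G) (htree : G.IsTree) (hcard : 5 ≤ Fintype.card V) :
    WellIndumatched G ↔
      ∀ f ∈ G.edgeSet, ∃! e, e ∈ goodPendantEdges G ∧ EdgeCovers G e f := by
  classical
  have hconn := htree.isConnected
  constructor
  · intro hWIM
    have huniq : ∀ e ∈ G.edgeSet, ∀ m₁ ∈ goodPendantEdges G, ∀ m₂ ∈ goodPendantEdges G,
        EdgeCovers G m₁ e → EdgeCovers G m₂ e → m₁ = m₂ :=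
      fun e he m₁ h1 m₂ h2 hc1 hc2 =>
        WIMAux.no_double_cover hconn hcard hWIM he h1 h2 hc1 hc2
    have hcov := WIMAux.no_uncovered htree hred hcard hWIM huniq
    intro f hf
    obtain ⟨m, hm, hc⟩ := hcov f hf
    exact ⟨m, ⟨hm, hc⟩, fun m' hm' => huniq f hf m' hm'.1 m hm hm'.2 hc⟩
  · intro hcov M N hM hN
    have huniq : ∀ e ∈ G.edgeSet, ∀ m₁ ∈ goodPendantEdges G, ∀ m₂ ∈ goodPendantEdges G,
        EdgeCovers G m₁ e → EdgeCovers G m₂ e → m₁ = m₂ := by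
      intro e he m₁ h1 m₂ h2 hc1 hc2
      obtain ⟨m, _, hu⟩ := hcov e he
      rw [hu m₁ ⟨h1, hc1⟩, hu m₂ ⟨h2, hc2⟩]
    have hMn := WIMAux.count_maximal hM huniq
    have hNn := WIMAux.count_maximal hN huniq
    have hemp : ∀ P : Set (Sym2 V), (P ∩ WIMAux.uncov G) = ∅ := by
      intro P
      apply Set.eq_empty_iff_forall_notMem.2
      rintro e ⟨_, heU⟩
      obtain ⟨m, ⟨hm, hc⟩, _⟩ := hcov e heU.1
      exact heU.2 m hm hc
    rw [hMn, hNn, hemp M, hemp N]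
end

section
/- For every positive integer r, the tree S_{r,2} obtained from the star K_{1,r} by subdividing each of its r edges with exactly 2 new vertices (so each edge becomes a path of length 3) is well-indumatched, and every maximal induced matching of S_{r,2} has size r. -/
open SimpleGraph

/-- The tree `S_{r,2}` obtained from the star `K_{1,r}` by subdividing each edge with
exactly `2` new vertices: the center is `none`, and for each `i : Fin r` the vertices
`some (i, 0)`, `some (i, 1)`, `some (i, 2)` form a path of length 3 from the center. -/
def Sr2 (r : ℕ) : SimpleGraph (Option (Fin r × Fin 3)) :=
  SimpleGraph.fromEdgeSet
    {e | ∃ i : Fin r,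
      e = s((none : Option (Fin r × Fin 3)), some (i, 0)) ∨
      e = s((some (i, 0) : Option (Fin r × Fin 3)), some (i, 1)) ∨
      e = s((some (i, 1) : Option (Fin r × Fin 3)), some (i, 2))}

set_option linter.unreachableTactic false
set_option linter.unusedTactic false

lemma adj_iff {r : ℕ} {u v : Option (Fin r × Fin 3)} : (Sr2 r).Adj u v ↔ ∃ i : Fin r,
    (u = none ∧ v = some (i,0)) ∨ (u = some (i,0) ∧ v = none) ∨
    (u = some (i,0) ∧ v = some (i,1)) ∨ (u = some (i,1) ∧ v = some (i,0)) ∨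
    (u = some (i,1) ∧ v = some (i,2)) ∨ (u = some (i,2) ∧ v = some (i,1)) := by
  rw [Sr2, fromEdgeSet_adj]
  simp only [Set.mem_setOf_eq, Sym2.eq_iff]
  constructor
  · rintro ⟨⟨i, h⟩, hne⟩
    exact ⟨i, by tauto⟩
  · rintro ⟨i, h⟩
    refine ⟨⟨i, by tauto⟩, ?_⟩
    rcases h with ⟨h1,h2⟩|⟨h1,h2⟩|⟨h1,h2⟩|⟨h1,h2⟩|⟨h1,h2⟩|⟨h1,h2⟩ <;> subst h1 <;> subst h2 <;> simp

lemma adj_b {r : ℕ} {i : Fin r} {v : Option (Fin r × Fin 3)} :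
    (Sr2 r).Adj (some (i,1)) v ↔ v = some (i,0) ∨ v = some (i,2) := by
  simp [adj_iff, Prod.ext_iff]
  aesop

lemma adj_d {r : ℕ} {i : Fin r} {v : Option (Fin r × Fin 3)} :
    (Sr2 r).Adj (some (i,2)) v ↔ v = some (i,1) := by
  simp [adj_iff, Prod.ext_iff]

def InLeg {r : ℕ} (i : Fin r) (e : Sym2 (Option (Fin r × Fin 3))) : Prop :=
  e = s((none : Option (Fin r × Fin 3)), some (i,0)) ∨
  e = s((some (i,0) : Option (Fin r × Fin 3)), some (i,1)) ∨
  e = s((some (i,1) : Option (Fin r × Fin 3)), some (i,2))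

lemma edge_leg {r : ℕ} {e : Sym2 (Option (Fin r × Fin 3))} (h : e ∈ (Sr2 r).edgeSet) :
    ∃ i : Fin r, InLeg i e := by
  rw [Sr2, edgeSet_fromEdgeSet] at h
  exact h.1

lemma leg_unique {r : ℕ} {i j : Fin r} {e : Sym2 (Option (Fin r × Fin 3))}
    (hi : InLeg i e) (hj : InLeg j e) : i = j := by
  rcases hi with h|h|h <;> subst h <;>
    rcases hj with h|h|h <;> simp [Sym2.eq_iff, Prod.ext_iff] at h <;> tauto

lemma same_leg {r : ℕ} {M : Set (Sym2 (Option (Fin r × Fin 3)))}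
    (hM : IsInducedMatching (Sr2 r) M) {i : Fin r} {e f : Sym2 (Option (Fin r × Fin 3))}
    (he : e ∈ M) (hf : f ∈ M) (hi : InLeg i e) (hj : InLeg i f) : e = f := by
  by_contra hne
  obtain ⟨-, hpair⟩ := hM
  rcases hi with h|h|h <;> subst h <;> rcases hj with h|h|h <;> subst h
  · exact hne rfl
  · exact absurd (hpair _ he _ hf hne (some (i,0)) (by simp) (some (i,0)) (by simp)).1 (by simp)
  · exact (hpair _ he _ hf hne (some (i,0)) (by simp) (some (i,1)) (by simp)).2
      (adj_iff.mpr ⟨i, by simp⟩)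
  · exact absurd (hpair _ he _ hf hne (some (i,0)) (by simp) (some (i,0)) (by simp)).1 (by simp)
  · exact hne rfl
  · exact absurd (hpair _ he _ hf hne (some (i,1)) (by simp) (some (i,1)) (by simp)).1 (by simp)
  · exact (hpair _ he _ hf hne (some (i,1)) (by simp) (some (i,0)) (by simp)).2
      (adj_iff.mpr ⟨i, by simp⟩)
  · exact absurd (hpair _ he _ hf hne (some (i,1)) (by simp) (some (i,1)) (by simp)).1 (by simp)
  · exact hne rfl

lemma exists_leg {r : ℕ} {M : Set (Sym2 (Option (Fin r × Fin 3)))}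
    (hM : IsMaximalInducedMatching (Sr2 r) M) (i : Fin r) : ∃ e ∈ M, InLeg i e := by
  by_contra hno
  push_neg at hno
  obtain ⟨⟨hsub, hpair⟩, hmax⟩ := hM
  set f0 : Sym2 (Option (Fin r × Fin 3)) := s(some (i,1), some (i,2)) with hf0
  have hf0M : f0 ∉ M := fun h => hno f0 h (Or.inr (Or.inr rfl))
  -- key: f0 is compatible with every edge of M
  have hcomp : ∀ f ∈ M, ∀ u ∈ f0, ∀ v ∈ f, u ≠ v ∧ ¬ (Sr2 r).Adj u v := by
    intro f hf u hu v hv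
    obtain ⟨j, hj⟩ := edge_leg (hsub hf)
    have hji : j ≠ i := fun h => hno f hf (h ▸ hj)
    have hvmem : v = none ∨ v = some (j,0) ∨ v = some (j,1) ∨ v = some (j,2) := by
      rcases hj with h|h|h <;> subst h <;> simp [Sym2.mem_iff] at hv <;> tauto
    rw [hf0, Sym2.mem_iff] at hu
    constructor
    · rcases hu with h|h <;> subst h <;> rcases hvmem with h|h|h|h <;> subst h <;>
        simp [Prod.ext_iff] <;> intro h <;> first | exact hji h | exact hji h.symm | exact hji h.1 | exact hji h.1.symm
    · rcases hu with h|h <;> subst h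
      · rw [adj_b]
        rintro (h|h) <;> rcases hvmem with h'|h'|h'|h' <;> rw [h'] at h <;>
          simp [Prod.ext_iff] at h <;> first | exact hji h | exact hji h.symm | exact hji h.1 | exact hji h.1.symm
      · rw [adj_d]
        intro h
        rcases hvmem with h'|h'|h'|h' <;> rw [h'] at h <;> simp [Prod.ext_iff] at h <;>
          first | exact hji h | exact hji h.symm | exact hji h.1 | exact hji h.1.symm
  have hN : IsInducedMatching (Sr2 r) (insert f0 M) := by
    constructor
    · rw [Set.insert_subset_iff]
      refine ⟨?_, hsub⟩
      rw [Sr2, edgeSet_fromEdgeSet]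
      exact ⟨⟨i, by simp [hf0]⟩, by simp [hf0]⟩
    · rintro e (rfl|he) f (rfl|hf) hne u hu v hv
      · exact absurd rfl hne
      · exact hcomp f hf u hu v hv
      · have := hcomp e he v hv u hu
        exact ⟨this.1.symm, fun h => this.2 h.symm⟩
      · exact hpair e he f hf hne u hu v hv
  have := hmax _ hN (Set.subset_insert _ _)
  exact hf0M (this ▸ Set.mem_insert f0 M)

lemma key {r : ℕ} (M : Set (Sym2 (Option (Fin r × Fin 3))))
    (hM : IsMaximalInducedMatching (Sr2 r) M) : M.ncard = r := by
  choose g hgM hgleg using exists_leg hM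
  have hginj : Function.Injective g := by
    intro i j h
    exact leg_unique (hgleg i) (h ▸ hgleg j)
  have hMeq : M = g '' Set.univ := by
    apply Set.Subset.antisymm
    · intro e he
      obtain ⟨i, hi⟩ := edge_leg (hM.1.1 he)
      exact ⟨i, Set.mem_univ i, (same_leg hM.1 (hgM i) he (hgleg i) hi)⟩
    · rintro e ⟨i, -, rfl⟩
      exact hgM i
  rw [hMeq, Set.ncard_image_of_injective _ hginj, Set.ncard_univ, Nat.card_eq_fintype_card,
    Fintype.card_fin]

/-- For every positive integer `r`, the tree `S_{r,2}` is well-indumatched and every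
maximal induced matching of `S_{r,2}` has size `r`. -/
theorem stmt_19 (r : ℕ) (hr : 0 < r) :
    WellIndumatched (Sr2 r) ∧
      ∀ M : Set (Sym2 (Option (Fin r × Fin 3))),
        IsMaximalInducedMatching (Sr2 r) M → M.ncard = r := by
  exact ⟨fun M N hM hN => by rw [key M hM, key N hN], fun M hM => key M hM⟩
end
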